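/- Let m : ℤ → ℤ → ℝ satisfy m(x,y) ≥ 0 for all x, y, m(x,y) = 0 whenever |x − y| > 1, and m(x,x+1) > 0 and m(x,x−1) > 0 for all x. Define m^{(1)} = m and m^{(n+1)}(x,y) = Σ_{z ∈ {y−1,y,y+1}} m^{(n)}(x,z)·m(z,y). For N ≥ 1 let m_N(x,y) = m(x,y) if both x, y ∈ [−N, N] ∩ ℤ and m_N(x,y) = 0 otherwise, with iterates m_N^{(n)} defined by the same recursion from m_N. Then limsup_{n→∞} (m^{(n)}(0,0))^{1/n} = sup_{N≥1} limsup_{n→∞} (m_N^{(n)}(0,0))^{1/n}, with values in [0,∞]. -/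

import Mathlib

/-- Iterates of a tridiagonal kernel on `ℤ`: `iter m n = m^{(n+1)}`, i.e. `iter m 0 = m`
and `m^{(n+1)}(x,y) = Σ_{z ∈ {y−1,y,y+1}} m^{(n)}(x,z)·m(z,y)`. -/
noncomputable def iter (m : ℤ → ℤ → ℝ) : ℕ → ℤ → ℤ → ℝ
  | 0 => m
  | n + 1 => fun x y =>
      iter m n x (y - 1) * m (y - 1) y + iter m n x y * m y y
        + iter m n x (y + 1) * m (y + 1) y

/-- Restriction of the kernel `m` to the box `[−N, N]`: entries outside the box vanish. -/
noncomputable def restrictBox (m : ℤ → ℤ → ℝ) (N : ℕ) : ℤ → ℤ → ℝ :=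
  fun x y => if |x| ≤ (N : ℤ) ∧ |y| ≤ (N : ℤ) then m x y else 0

/-! Restricting the kernel to a box only lowers the iterates, which gives `≥`. Conversely, a
nearest-neighbour walk of `n + 1` steps started at `0` stays in `[-(n+1), n+1]`, so `m^{(n+1)}(0,0)`
is already an iterate of the box kernel `m_{n+1}`. Iterates at the origin are supermultiplicative,
`m_N^{(a)}(0,0) · m_N^{(b)}(0,0) ≤ m_N^{(a+b)}(0,0)`, hence `m_N^{(k(n+1))}(0,0) ≥ (m_N^{(n+1)}(0,0))^k`
and the `(n+1)`-th root of `m_N^{(n+1)}(0,0)` is bounded by the limsup along these multiples. -/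

open Filter Finset

lemma iter_succ_eq_sum (w : ℤ → ℤ → ℝ) (n : ℕ) (x y : ℤ) :
    iter w (n + 1) x y = ∑ z ∈ Icc (y - 1) (y + 1), iter w n x z * w z y := by
  have hIcc : Icc (y - 1) (y + 1) = {y - 1, y, y + 1} := by
    ext z; simp only [mem_Icc, mem_insert, mem_singleton]; omega
  rw [hIcc, sum_insert (by simp; omega), sum_pair (by simp)]
  simp only [iter]
  ring

lemma iter_nonneg {w : ℤ → ℤ → ℝ} (hw : ∀ x y, 0 ≤ w x y) (n : ℕ) (x y : ℤ) :
    0 ≤ iter w n x y := by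
  induction n generalizing y with
  | zero => exact hw x y
  | succ n ih =>
    rw [iter_succ_eq_sum]
    exact sum_nonneg fun z _ => mul_nonneg (ih z) (hw z y)

lemma iter_mono {w w' : ℤ → ℤ → ℝ} (hw : ∀ x y, 0 ≤ w x y) (hle : ∀ x y, w x y ≤ w' x y)
    (n : ℕ) (x y : ℤ) : iter w n x y ≤ iter w' n x y := by
  induction n generalizing y with
  | zero => exact hle x y
  | succ n ih =>
    simp only [iter_succ_eq_sum]
    exact sum_le_sum fun z _ =>
      mul_le_mul (ih z) (hle z y) (hw z y) ((iter_nonneg hw n x z).trans (ih z))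

lemma restrictBox_nonneg {w : ℤ → ℤ → ℝ} (hw : ∀ x y, 0 ≤ w x y) (N : ℕ) (x y : ℤ) :
    0 ≤ restrictBox w N x y := by
  unfold restrictBox; split_ifs <;> [exact hw x y; exact le_rfl]

lemma restrictBox_le {w : ℤ → ℤ → ℝ} (hw : ∀ x y, 0 ≤ w x y) (N : ℕ) (x y : ℤ) :
    restrictBox w N x y ≤ w x y := by
  unfold restrictBox; split_ifs <;> [exact le_rfl; exact hw x y]

section NearestNeighbour

variable {w : ℤ → ℤ → ℝ} (hnb : ∀ x y : ℤ, 1 < |x - y| → w x y = 0)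
include hnb

lemma eq_zero_of_notMem_Icc {z y : ℤ} (hz : z ∉ Icc (y - 1) (y + 1)) : w z y = 0 :=
  hnb z y (lt_abs.mpr (by rw [mem_Icc] at hz; omega))

lemma iter_eq_zero_of_lt_abs_sub (n : ℕ) {x y : ℤ} (hxy : (n : ℤ) + 1 < |x - y|) :
    iter w n x y = 0 := by
  induction n generalizing y with
  | zero => exact hnb x y (by simpa using hxy)
  | succ n ih =>
    rw [iter_succ_eq_sum]
    refine sum_eq_zero fun z hz => ?_
    have hzy : |z - y| ≤ 1 := abs_le.mpr (by rw [mem_Icc] at hz; omega)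
    have hxz : (n : ℤ) + 1 < |x - z| := by
      have := abs_sub_le x z y
      push_cast at hxy
      linarith
    rw [ih hxz, zero_mul]

lemma iter_mul_iter_le (hw : ∀ x y, 0 ≤ w x y) (a b : ℕ) (x z y : ℤ) :
    iter w a x z * iter w b z y ≤ iter w (a + b + 1) x y := by
  induction b generalizing y with
  | zero =>
    rw [iter_succ_eq_sum, iter]
    by_cases hz : z ∈ Icc (y - 1) (y + 1)
    · exact single_le_sum (f := fun z => iter w a x z * w z y)
        (fun z _ => mul_nonneg (iter_nonneg hw a x z) (hw z y)) hz
    · rw [eq_zero_of_notMem_Icc hnb hz, mul_zero]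
      exact sum_nonneg fun z _ => mul_nonneg (iter_nonneg hw a x z) (hw z y)
  | succ b ih =>
    rw [show a + (b + 1) + 1 = a + b + 1 + 1 by omega, iter_succ_eq_sum, iter_succ_eq_sum,
      mul_sum]
    refine sum_le_sum fun z' _ => ?_
    rw [← mul_assoc]
    exact mul_le_mul_of_nonneg_right (ih z') (hw z' y)

lemma restrictBox_eq_zero_of_lt_abs_sub (N : ℕ) (x y : ℤ) (hxy : 1 < |x - y|) :
    restrictBox w N x y = 0 := by
  unfold restrictBox; split_ifs <;> [exact hnb x y hxy; rfl]

lemma iter_restrictBox_eq (N n : ℕ) {x : ℤ} (hx : |x| + ((n : ℤ) + 1) ≤ N) (y : ℤ) :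
    iter (restrictBox w N) n x y = iter w n x y := by
  induction n generalizing y with
  | zero =>
    change restrictBox w N x y = w x y
    unfold restrictBox
    split_ifs with hbox
    · rfl
    · have hy : (N : ℤ) < |y| := by
        by_contra! hy
        exact hbox ⟨by linarith [abs_nonneg x], hy⟩
      have := abs_sub_abs_le_abs_sub y x
      rw [abs_sub_comm] at this
      exact (hnb x y (by push_cast at hx; linarith)).symm
  | succ n ih =>
    simp only [iter_succ_eq_sum, ih (by push_cast at hx; linarith)]
    refine sum_congr rfl fun z hz => ?_
    rcases lt_or_ge ((n : ℤ) + 1) |x - z| with hxz | hxz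
    · rw [iter_eq_zero_of_lt_abs_sub hnb n hxz, zero_mul, zero_mul]
    · have hzy : |z - y| ≤ 1 := abs_le.mpr (by rw [mem_Icc] at hz; omega)
      have h₁ := abs_sub_abs_le_abs_sub z x
      have h₂ := abs_sub_abs_le_abs_sub y z
      rw [abs_sub_comm] at h₁ h₂
      push_cast at hx
      rw [restrictBox, if_pos ⟨by linarith, by linarith⟩]

end NearestNeighbour

lemma rpow_inv_le_of_pow_le {x y : ℝ} (hx : 0 ≤ x) {d k : ℕ} (hk : k ≠ 0) (hxy : x ^ k ≤ y) :
    x ^ ((d : ℝ) + 1)⁻¹ ≤ y ^ ((k : ℝ) * ((d : ℝ) + 1))⁻¹ := by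
  calc x ^ ((d : ℝ) + 1)⁻¹ = (x ^ k) ^ ((k : ℝ) * ((d : ℝ) + 1))⁻¹ := by
        rw [← Real.rpow_natCast, ← Real.rpow_mul hx]
        congr 1
        field_simp
    _ ≤ y ^ ((k : ℝ) * ((d : ℝ) + 1))⁻¹ := by gcongr

lemma ofReal_rpow_le_limsup_of_mul_le {u : ℕ → ℝ} (hu₀ : ∀ n, 0 ≤ u n)
    (hu : ∀ a b, u a * u b ≤ u (a + b + 1)) (d : ℕ) :
    ENNReal.ofReal (u d ^ ((d : ℝ) + 1)⁻¹)
      ≤ limsup (fun n : ℕ => ENNReal.ofReal (u n ^ ((n : ℝ) + 1)⁻¹)) atTop := by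
  have hpow : ∀ j : ℕ, u d ^ (j + 1) ≤ u (j * (d + 1) + d) := by
    intro j
    induction j with
    | zero => simp
    | succ j ih =>
      calc u d ^ (j + 1 + 1) = u d ^ (j + 1) * u d := pow_succ _ _
        _ ≤ u (j * (d + 1) + d) * u d := mul_le_mul_of_nonneg_right ih (hu₀ d)
        _ ≤ u ((j + 1) * (d + 1) + d) := by
          convert hu (j * (d + 1) + d) d using 2; ring
  refine le_limsup_of_frequently_le' (frequently_atTop.mpr fun a => ⟨a * (d + 1) + d, ?_, ?_⟩)
  · nlinarith
  · refine ENNReal.ofReal_le_ofReal ?_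
    convert rpow_inv_le_of_pow_le (hu₀ d) a.succ_ne_zero (hpow a) using 3
    push_cast; ring

theorem stmt11_general (m : ℤ → ℤ → ℝ)
    (hnn : ∀ x y, 0 ≤ m x y)
    (hnb : ∀ x y : ℤ, 1 < |x - y| → m x y = 0) :
    Filter.limsup
        (fun n : ℕ => ENNReal.ofReal ((iter m n 0 0) ^ (((n : ℝ) + 1)⁻¹)))
        Filter.atTop
      = ⨆ (N : ℕ) (_ : 1 ≤ N),
          Filter.limsup
            (fun n : ℕ =>
              ENNReal.ofReal ((iter (restrictBox m N) n 0 0) ^ (((n : ℝ) + 1)⁻¹)))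
            Filter.atTop := by
  refine le_antisymm (limsup_le_of_le (by isBoundedDefault) (.of_forall fun n => ?_)) ?_
  · have hbox : iter (restrictBox m (n + 1)) n 0 0 = iter m n 0 0 :=
      iter_restrictBox_eq hnb (n + 1) n (by simp) 0
    rw [← hbox]
    exact le_iSup₂_of_le (n + 1) (by omega) (ofReal_rpow_le_limsup_of_mul_le
      (fun k => iter_nonneg (restrictBox_nonneg hnn _) k 0 0)
      (fun a b => iter_mul_iter_le (restrictBox_eq_zero_of_lt_abs_sub hnb _)
        (restrictBox_nonneg hnn _) a b 0 0 0) n)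
  · refine iSup₂_le fun N _ => limsup_le_limsup (.of_forall fun n => ?_)
    exact ENNReal.ofReal_le_ofReal (Real.rpow_le_rpow
      (iter_nonneg (restrictBox_nonneg hnn N) n 0 0)
      (iter_mono (restrictBox_nonneg hnn N) (restrictBox_le hnn N) n 0 0) (by positivity))

/-- For a nonnegative nearest-neighbour kernel `m` on `ℤ` with
`m(x,x+1) > 0` and `m(x,x−1) > 0` for all `x`, the spectral radius at the origin
satisfies the finite-box approximation property
`limsup_n (m^{(n)}(0,0))^{1/n} = sup_{N≥1} limsup_n (m_N^{(n)}(0,0))^{1/n}` in `[0,∞]`. -/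
theorem stmt11 (m : ℤ → ℤ → ℝ)
    (hnn : ∀ x y, 0 ≤ m x y)
    (hnb : ∀ x y : ℤ, 1 < |x - y| → m x y = 0)
    (hup : ∀ x, 0 < m x (x + 1)) (hdown : ∀ x, 0 < m x (x - 1)) :
    Filter.limsup
        (fun n : ℕ => ENNReal.ofReal ((iter m n 0 0) ^ (((n : ℝ) + 1)⁻¹)))
        Filter.atTop
      = ⨆ (N : ℕ) (_ : 1 ≤ N),
          Filter.limsup
            (fun n : ℕ =>
              ENNReal.ofReal ((iter (restrictBox m N) n 0 0) ^ (((n : ℝ) + 1)⁻¹)))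
            Filter.atTop :=
  stmt11_general m hnn hnb
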